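/- The reachability-equivalence converse fails: the CRNs {A→B, B→C, C→A} and {A→C, C→B, B→A} give rise to the same reachability relation between formal states, yet are not pathway decomposition equivalent (their formal bases differ). -/

import Mathlib

namespace CRNVerif

variable {σ : Type} [DecidableEq σ]

/-- A state is a multiset of species. -/
abbrev State (σ : Type) := Multiset σ
/-- A reaction is a pair (reactants, products) of multisets of species. -/
abbrev Reaction (σ : Type) := Multiset σ × Multiset σ
/-- A pathway is a finite sequence of reactions. -/
abbrev Pathway (σ : Type) := List (Reaction σ)

/-- Result of applying reaction `r` in state `S` (i.e. `S ⊕ r`). -/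
def applyRxn (S : State σ) (r : Reaction σ) : State σ := S - r.1 + r.2

/-- Minimal initial state of a pathway: the smallest state in which
its reactions can occur in succession. -/
def minInit : Pathway σ → State σ
  | [] => 0
  | r :: p => r.1 + (minInit p - r.2)

/-- State reached from `S` after performing all reactions of `p` in order. -/
def finalFrom (S : State σ) : Pathway σ → State σ
  | [] => S
  | r :: p => finalFrom (applyRxn S r) p

/-- The final state of a pathway (starting from its minimal initial state). -/
def finalState (p : Pathway σ) : State σ := finalFrom (minInit p) p

/-- The state `S_i` after the first `i` reactions, starting from the minimal initial state. -/
def stateAt (p : Pathway σ) (i : ℕ) : State σ := finalFrom (minInit p) (p.take i)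

/-- A state is formal if it contains only formal species (as given by `fm`). -/
def FormalState (fm : σ → Bool) (S : State σ) : Prop := ∀ x ∈ S, fm x = true

/-- `Formal(S)`: the multiset obtained by removing all intermediate species from `S`. -/
def formalPart (fm : σ → Bool) (S : State σ) : State σ := S.filter (fun x => fm x = true)

/-- A reaction is trivial if reactants equal products. -/
def TrivialRxn (r : Reaction σ) : Prop := r.1 = r.2

/-- A CRN is a (finite) set of nontrivial reactions. -/
def NontrivialRxns (C : Finset (Reaction σ)) : Prop := ∀ r ∈ C, ¬ TrivialRxn r

/-- A formal CRN contains only formal reactions. -/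
def IsFormalCRN (fm : σ → Bool) (C : Finset (Reaction σ)) : Prop :=
  ∀ r ∈ C, FormalState fm r.1 ∧ FormalState fm r.2

/-- `p` is a pathway of the CRN `C`. -/
def PathwayOf (C : Finset (Reaction σ)) (p : Pathway σ) : Prop := ∀ r ∈ p, r ∈ C

/-- `Interleave l₁ l₂ l`: `l` can be partitioned into the two (order-preserving,
not necessarily contiguous) subsequences `l₁` and `l₂`. -/
inductive Interleave {α : Type u} : List α → List α → List α → Prop
  | nil : Interleave [] [] []
  | left {a : α} {l₁ l₂ l : List α} : Interleave l₁ l₂ l → Interleave (a :: l₁) l₂ (a :: l)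
  | right {a : α} {l₁ l₂ l : List α} : Interleave l₁ l₂ l → Interleave l₁ (a :: l₂) (a :: l)

/-- `InterleaveMany qs p`: `p` is generated by interleaving the lists in `qs`. -/
inductive InterleaveMany {α : Type u} : List (List α) → List α → Prop
  | nil : InterleaveMany [] []
  | cons {q r p : List α} {qs : List (List α)} :
      Interleave q r p → InterleaveMany qs r → InterleaveMany (q :: qs) p

/-- A pathway is semiformal if its minimal initial state is formal. -/
def Semiformal (fm : σ → Bool) (p : Pathway σ) : Prop := FormalState fm (minInit p)

/-- A formal pathway: a (nonempty) pathway whose minimal initial state and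
final state are both formal. -/
def FormalPathway (fm : σ → Bool) (p : Pathway σ) : Prop :=
  p ≠ [] ∧ FormalState fm (minInit p) ∧ FormalState fm (finalState p)

/-- A formal pathway is decomposable if it can be partitioned into two nonempty
subsequences that are each formal pathways. -/
def FDecomposable (fm : σ → Bool) (p : Pathway σ) : Prop :=
  ∃ q₁ q₂, q₁ ≠ [] ∧ q₂ ≠ [] ∧ Interleave q₁ q₂ p ∧
    FormalPathway fm q₁ ∧ FormalPathway fm q₂

/-- A prime formal pathway is a formal pathway that is not decomposable. -/
def PrimePathway (fm : σ → Bool) (p : Pathway σ) : Prop :=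
  FormalPathway fm p ∧ ¬ FDecomposable fm p

/-- The formal basis: the set of (initial state, final state) pairs of prime
formal pathways of `C`. -/
def formalBasis (fm : σ → Bool) (C : Finset (Reaction σ)) : Set (Reaction σ) :=
  { r | ∃ p, PathwayOf C p ∧ PrimePathway fm p ∧ r = (minInit p, finalState p) }

/-- Two sets of reactions are equal up to addition/removal of trivial reactions. -/
def EqUpToTrivial (A B : Set (Reaction σ)) : Prop :=
  {r ∈ A | ¬ TrivialRxn r} = {r ∈ B | ¬ TrivialRxn r}

/-- The reaction at (0-based) index `j` of `p` is a turning point: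
before it only formal species of the initial state appear, from it on only formal
species of the final state appear, and at the moment the turning point fires,
no formal species are left over. -/
def TurningAt (fm : σ → Bool) (p : Pathway σ) (j : ℕ) : Prop :=
  ∃ h : j < p.length,
    (∀ i ≤ j, formalPart fm (stateAt p i) ≤ minInit p) ∧
    (∀ i, j < i → i ≤ p.length → formalPart fm (stateAt p i) ≤ finalState p) ∧
    formalPart fm (stateAt p j - (p.get ⟨j, h⟩).1) = 0

/-- A regular formal pathway: one that implements a formal reaction,
i.e. has a turning point. -/
def RegularPathway (fm : σ → Bool) (p : Pathway σ) : Prop :=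
  FormalPathway fm p ∧ ∃ j, TurningAt fm p j

/-- A CRN is regular if every prime formal pathway is regular. -/
def RegularCRN (fm : σ → Bool) (C : Finset (Reaction σ)) : Prop :=
  ∀ p, PathwayOf C p → PrimePathway fm p → RegularPathway fm p

/-- `q` is a strong closing pathway for `p` (within CRN `C`): it can occur in the
final state of `p`, consumes no formal species, and leads back to a formal state. -/
def ClosingPathway (fm : σ → Bool) (C : Finset (Reaction σ)) (p q : Pathway σ) : Prop :=
  PathwayOf C q ∧ minInit q ≤ finalState p ∧ (∀ r ∈ q, formalPart fm r.1 = 0) ∧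
  FormalState fm (finalFrom (finalState p) q)

/-- A CRN is strongly tidy if every semiformal pathway has a strong closing pathway. -/
def StronglyTidy (fm : σ → Bool) (C : Finset (Reaction σ)) : Prop :=
  ∀ p, PathwayOf C p → Semiformal fm p → ∃ q, ClosingPathway fm C p q

/-- A semiformal pathway is decomposable if it can be partitioned into two
nonempty subsequences that are each semiformal. -/
def SDecomposable (fm : σ → Bool) (p : Pathway σ) : Prop :=
  ∃ q₁ q₂, q₁ ≠ [] ∧ q₂ ≠ [] ∧ Interleave q₁ q₂ p ∧ Semiformal fm q₁ ∧ Semiformal fm q₂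

/-- The width of a pathway: the maximum size of the states it passes through. -/
def width (p : Pathway σ) : ℕ :=
  ((List.range (p.length + 1)).map (fun i => Multiset.card (stateAt p i))).foldr max 0

/-- The branching factor of a CRN. -/
def branching (C : Finset (Reaction σ)) : ℕ :=
  C.sup (fun r => max (Multiset.card r.1) (Multiset.card r.2))

/-- Formal state `T` is reachable from `S` via reactions of `C`. -/
def Reachable (C : Finset (Reaction σ)) (S T : State σ) : Prop :=
  ∃ p, PathwayOf C p ∧ minInit p ≤ S ∧ finalFrom S p = T

/-- `C` and `C'` share no intermediate species: any species occurring in both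
CRNs is formal. -/
def NoSharedIntermediates (fm : σ → Bool) (C C' : Finset (Reaction σ)) : Prop :=
  ∀ r ∈ C, ∀ r' ∈ C', ∀ x : σ, x ∈ r.1 + r.2 → x ∈ r'.1 + r'.2 → fm x = true

/-- The formal closure of a pathway: the minimal state containing the formal part
of every state along the pathway. -/
def formalClosure (fm : σ → Bool) (p : Pathway σ) : State σ :=
  ((List.range (p.length + 1)).map (fun i => formalPart fm (stateAt p i))).foldr (· ∪ ·) 0

/-- The decomposed final states of a semiformal pathway: all pairs of final
states arising from decompositions into two (nonempty) semiformal pathways. -/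
def DFS (fm : σ → Bool) (p : Pathway σ) : Set (State σ × State σ) :=
  { T | ∃ q₁ q₂, q₁ ≠ [] ∧ q₂ ≠ [] ∧ Interleave q₁ q₂ p ∧
        Semiformal fm q₁ ∧ Semiformal fm q₂ ∧ T = (finalState q₁, finalState q₂) }

/-- The minimal state containing the formal parts of all states strictly after index `j`. -/
def rfsAt (fm : σ → Bool) (p : Pathway σ) (j : ℕ) : State σ :=
  (((List.range (p.length + 1)).filter (fun i => j < i)).map
      (fun i => formalPart fm (stateAt p i))).foldr (· ∪ ·) 0

/-- The regular final states of a pathway: the minimal states `T` witnessed by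
potential turning point reactions. -/
def RFS (fm : σ → Bool) (p : Pathway σ) : Set (State σ) :=
  { T | ∃ j, ∃ h : j < p.length,
      (∀ i ≤ j, formalPart fm (stateAt p i) ≤ minInit p) ∧
      formalPart fm (stateAt p j - (p.get ⟨j, h⟩).1) = 0 ∧
      T = rfsAt fm p j }

/-- The signature of a semiformal pathway: (initial state, final state, width,
formal closure, DFS, RFS). -/
def signature (fm : σ → Bool) (p : Pathway σ) :
    State σ × State σ × ℕ × State σ × Set (State σ × State σ) × Set (State σ) :=
  (minInit p, finalState p, width p, formalClosure fm p, DFS fm p, RFS fm p)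

/-- An annotated prime pathway: exactly its chosen turning point is annotated,
with the corresponding formal basis reaction. -/
def GoodAnnotation (fm : σ → Bool) (ap : List (Reaction σ × Option (Reaction σ))) : Prop :=
  PrimePathway fm (ap.map Prod.fst) ∧
  ∃ j, TurningAt fm (ap.map Prod.fst) j ∧
    ap.map Prod.snd = (List.range ap.length).map
      (fun i => if i = j then
          some (minInit (ap.map Prod.fst), finalState (ap.map Prod.fst)) else none)

/-- `p` can be interpreted as `q`: `q` can occur in the initial state of `p`, has
the same net effect, and there is a decomposition of `p` into prime formal pathways
such that replacing a chosen turning point of each by the corresponding formal basis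
element and removing all other reactions yields `q`. -/
def Interpreted (fm : σ → Bool) (p q : Pathway σ) : Prop :=
  minInit q ≤ minInit p ∧
  finalFrom (minInit p) q = finalState p ∧
  ∃ ap : List (Reaction σ × Option (Reaction σ)),
    ap.map Prod.fst = p ∧ (ap.map Prod.snd).reduceOption = q ∧
    ∃ aps, InterleaveMany aps ap ∧ ∀ a ∈ aps, GoodAnnotation fm a


/-- The three species, all formal. -/
inductive Sp : Type
  | A | B | C
deriving DecidableEq

/-! Each reaction of the cycle `A → B → C → A` is the composite of two reactions of the
reversed cycle `A → C → B → A` and vice versa, so the two CRNs reach the same states.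
When every species is formal, any split of a pathway into two nonempty subsequences is a
decomposition, so the prime pathways are the single reactions and the formal basis of a CRN
is the CRN itself; the two cycles have different reactions. -/

lemma minInit_cons_le_iff {S : State σ} {r : Reaction σ} {p : Pathway σ} :
    minInit (r :: p) ≤ S ↔ r.1 ≤ S ∧ minInit p ≤ applyRxn S r := by
  constructor
  · intro h
    have h₂ : minInit p - r.2 ≤ S - r.1 := le_tsub_of_add_le_left h
    exact ⟨le_self_add.trans h, le_tsub_add.trans (add_le_add_left h₂ r.2)⟩
  · rintro ⟨h₁, h₂⟩
    have h₃ : minInit p - r.2 ≤ S - r.1 := by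
      simpa [applyRxn] using tsub_le_tsub_right h₂ r.2
    calc r.1 + (minInit p - r.2) ≤ r.1 + (S - r.1) := add_le_add_right h₃ _
      _ = S := add_tsub_cancel_of_le h₁

lemma finalFrom_append (S : State σ) (p q : Pathway σ) :
    finalFrom S (p ++ q) = finalFrom (finalFrom S p) q := by
  induction p generalizing S with
  | nil => rfl
  | cons r p ih => exact ih _

lemma minInit_append_le {S : State σ} {p q : Pathway σ}
    (hp : minInit p ≤ S) (hq : minInit q ≤ finalFrom S p) : minInit (p ++ q) ≤ S := by
  induction p generalizing S with
  | nil => exact hq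
  | cons r p ih =>
    rw [minInit_cons_le_iff] at hp
    exact minInit_cons_le_iff.mpr ⟨hp.1, ih hp.2 hq⟩

lemma minInit_singleton (r : Reaction σ) : minInit [r] = r.1 := by
  simp [minInit]

lemma finalState_singleton (r : Reaction σ) : finalState [r] = r.2 := by
  simp [finalState, minInit, finalFrom, applyRxn]

lemma applyRxn_applyRxn (S a m b : State σ) :
    applyRxn (applyRxn S (a, m)) (m, b) = applyRxn S (a, b) := by
  simp [applyRxn]

namespace Reachable

variable {C D : Finset (Reaction σ)} {S T U : State σ}

lemma refl (C : Finset (Reaction σ)) (S : State σ) : Reachable C S S :=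
  ⟨[], by simp [PathwayOf], by simp [minInit], rfl⟩

lemma trans (h₁ : Reachable C S T) (h₂ : Reachable C T U) : Reachable C S U := by
  obtain ⟨p, hpC, hpS, rfl⟩ := h₁
  obtain ⟨q, hqC, hqT, rfl⟩ := h₂
  refine ⟨p ++ q, ?_, minInit_append_le hpS hqT, finalFrom_append S p q⟩
  simpa [PathwayOf, or_imp, forall_and] using And.intro hpC hqC

lemma single {r : Reaction σ} (hr : r ∈ C) (hS : r.1 ≤ S) : Reachable C S (applyRxn S r) :=
  ⟨[r], by simpa [PathwayOf] using hr, by rwa [minInit_singleton], rfl⟩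

lemma two_steps {a m b : State σ} (h₁ : (a, m) ∈ C) (h₂ : (m, b) ∈ C) (hS : a ≤ S) :
    Reachable C S (applyRxn S (a, b)) := by
  rw [← applyRxn_applyRxn]
  exact (single h₁ hS).trans (single h₂ (by simp [applyRxn]))

lemma mono_of_simulates
    (hsim : ∀ r ∈ C, ∀ S : State σ, r.1 ≤ S → Reachable D S (applyRxn S r))
    (h : Reachable C S T) : Reachable D S T := by
  obtain ⟨p, hpC, hpS, rfl⟩ := h
  induction p generalizing S with
  | nil => exact refl D S
  | cons r p ih =>
    rw [minInit_cons_le_iff] at hpS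
    have hrC : r ∈ C := hpC r List.mem_cons_self
    exact (hsim r hrC S hpS.1).trans
      (ih (fun r' hr' => hpC r' (List.mem_cons_of_mem r hr')) hpS.2)

end Reachable

def threeCycle (x y z : σ) : Finset (Reaction σ) :=
  {({x}, {y}), ({y}, {z}), ({z}, {x})}

lemma reachable_threeCycle_reverse {x y z : σ} {S T : State σ}
    (h : Reachable (threeCycle x y z) S T) : Reachable (threeCycle x z y) S T := by
  refine h.mono_of_simulates fun r hr S hS => ?_
  simp only [threeCycle, Finset.mem_insert, Finset.mem_singleton] at hr
  rcases hr with rfl | rfl | rfl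
  · exact Reachable.two_steps (m := {z}) (by simp [threeCycle]) (by simp [threeCycle]) hS
  · exact Reachable.two_steps (m := {x}) (by simp [threeCycle]) (by simp [threeCycle]) hS
  · exact Reachable.two_steps (m := {y}) (by simp [threeCycle]) (by simp [threeCycle]) hS

lemma reachable_threeCycle_reverse_iff {x y z : σ} {S T : State σ} :
    Reachable (threeCycle x y z) S T ↔ Reachable (threeCycle x z y) S T :=
  ⟨reachable_threeCycle_reverse, reachable_threeCycle_reverse⟩

lemma Interleave.length_add {α : Type u} {l₁ l₂ l : List α} (h : Interleave l₁ l₂ l) :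
    l₁.length + l₂.length = l.length := by
  induction h with
  | nil => rfl
  | left _ ih => simp only [List.length_cons]; omega
  | right _ ih => simp only [List.length_cons]; omega

lemma Interleave.nil_left {α : Type u} (l : List α) : Interleave [] l l := by
  induction l with
  | nil => exact .nil
  | cons a l ih => exact .right ih

lemma formalPathway_true_iff {p : Pathway σ} : FormalPathway (fun _ => true) p ↔ p ≠ [] := by
  simp [FormalPathway, FormalState]

lemma primePathway_true_iff {p : Pathway σ} :
    PrimePathway (fun _ => true) p ↔ ∃ r, p = [r] := by
  simp only [PrimePathway, FDecomposable, formalPathway_true_iff]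
  constructor
  · rintro ⟨hne, hprime⟩
    obtain ⟨r, q, rfl⟩ := List.exists_cons_of_ne_nil hne
    rcases q with _ | ⟨s, q⟩
    · exact ⟨r, rfl⟩
    · exact (hprime ⟨[r], s :: q, by simp, by simp, .left (Interleave.nil_left _),
        by simp, by simp⟩).elim
  · rintro ⟨r, rfl⟩
    refine ⟨by simp, ?_⟩
    rintro ⟨q₁, q₂, hq₁, hq₂, hint, -, -⟩
    have := hint.length_add
    have := List.length_pos_iff.mpr hq₁
    have := List.length_pos_iff.mpr hq₂
    simp only [List.length_singleton] at *
    omega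

lemma formalBasis_true (C : Finset (Reaction σ)) : formalBasis (fun _ => true) C = C := by
  ext r
  simp only [formalBasis, primePathway_true_iff, Set.mem_ofPred_eq, Finset.mem_coe]
  constructor
  · rintro ⟨p, hpC, ⟨s, rfl⟩, rfl⟩
    simpa [minInit_singleton, finalState_singleton, PathwayOf] using hpC
  · intro hr
    exact ⟨[r], by simpa [PathwayOf] using hr, ⟨r, rfl⟩, by
      rw [minInit_singleton, finalState_singleton]⟩

lemma nontrivialRxns_threeCycle {x y z : σ} (hxy : x ≠ y) (hyz : y ≠ z) (hzx : z ≠ x) :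
    NontrivialRxns (threeCycle x y z) := by
  simp [NontrivialRxns, threeCycle, TrivialRxn, hxy, hyz, hzx]

lemma eqUpToTrivial_coe_iff {α : Type} {C D : Finset (Reaction α)} (hC : NontrivialRxns C)
    (hD : NontrivialRxns D) : EqUpToTrivial (C : Set (Reaction α)) D ↔ C = D := by
  rw [EqUpToTrivial, Set.sep_eq_self_iff_mem_true.mpr hC, Set.sep_eq_self_iff_mem_true.mpr hD,
    Finset.coe_inj]

/-- The CRNs {A→B, B→C, C→A} and {A→C, C→B, B→A} have the same reachability
between formal states but are not pathway decomposition equivalent. -/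
theorem reachability_equivalence_converse_fails :
    let fm : Sp → Bool := fun _ => true
    let C₁ : Finset (Reaction Sp) :=
      {(({Sp.A} : Multiset Sp), ({Sp.B} : Multiset Sp)),
       (({Sp.B} : Multiset Sp), ({Sp.C} : Multiset Sp)),
       (({Sp.C} : Multiset Sp), ({Sp.A} : Multiset Sp))}
    let C₂ : Finset (Reaction Sp) :=
      {(({Sp.A} : Multiset Sp), ({Sp.C} : Multiset Sp)),
       (({Sp.C} : Multiset Sp), ({Sp.B} : Multiset Sp)),
       (({Sp.B} : Multiset Sp), ({Sp.A} : Multiset Sp))}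
    (∀ S T : State Sp, FormalState fm S → FormalState fm T →
      (Reachable C₁ S T ↔ Reachable C₂ S T)) ∧
    ¬ EqUpToTrivial (formalBasis fm C₁) (formalBasis fm C₂) := by
  intro fm C₁ C₂
  have hC₁ : NontrivialRxns C₁ := nontrivialRxns_threeCycle (by decide) (by decide) (by decide)
  have hC₂ : NontrivialRxns C₂ := nontrivialRxns_threeCycle (by decide) (by decide) (by decide)
  refine ⟨fun S T _ _ => reachable_threeCycle_reverse_iff (x := Sp.A), ?_⟩
  rw [formalBasis_true, formalBasis_true, eqUpToTrivial_coe_iff hC₁ hC₂]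
  decide

end CRNVerif
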